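/- arXiv:2502.06455 — 2 statements merged into one kernel-verified Lean document; each statement's English description precedes it below -/
import Mathlib

section
/- Let H be a real Hilbert space, d a bounded coercive bilinear form on H with coercivity constant δ, c a bounded trilinear form with |c(v;ψ,φ)| ≤ C²‖v‖‖ψ‖‖φ‖ and c(v;φ,φ) = 0, and κ̃ a monotone map H → H'. For û₁, û₂ ∈ H let ψᵢ solve ⟨κ̃(ψᵢ), φ⟩ + c(ûᵢ; ψᵢ, φ) + d(ψᵢ, φ) = G(φ) for all φ ∈ H. Then ‖ψ₁ − ψ₂‖ ≤ (C²/δ)·‖ψ₂‖·‖û₁ − û₂‖. -/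
/-! Test the difference of the two equations with `φ = ψ₁ - ψ₂`. Since `c v φ φ = 0`, the
convection terms collapse to `c (û₁ - û₂) ψ₂ φ`; monotonicity of `κ` drops the `κ`-term and
coercivity of `d` gives `δ ‖φ‖² ≤ C² ‖û₁ - û₂‖ ‖ψ₂‖ ‖φ‖`. -/

open NormedSpace

theorem LinearMap.sub_apply_sub_of_diag_eq_zero {R M : Type*} [CommRing R] [AddCommGroup M]
    [Module R M] (c : M →ₗ[R] M →ₗ[R] M →ₗ[R] R) (hc_skew : ∀ v φ : M, c v φ φ = 0)
    (u₁ u₂ ψ₁ ψ₂ : M) :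
    c u₁ ψ₁ (ψ₁ - ψ₂) - c u₂ ψ₂ (ψ₁ - ψ₂) = c (u₁ - u₂) ψ₂ (ψ₁ - ψ₂) := by
  have h_split : c u₁ ψ₁ (ψ₁ - ψ₂) = c u₁ ψ₂ (ψ₁ - ψ₂) := by
    have h := hc_skew u₁ (ψ₁ - ψ₂)
    rw [map_sub (c u₁) ψ₁ ψ₂, LinearMap.sub_apply] at h
    exact sub_eq_zero.mp h
  rw [h_split, map_sub c u₁ u₂, LinearMap.sub_apply, LinearMap.sub_apply]

theorem energy_identity_sub {H : Type*} [SeminormedAddCommGroup H] [NormedSpace ℝ H]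
    (c : H →ₗ[ℝ] H →ₗ[ℝ] H →ₗ[ℝ] ℝ) (d : H →ₗ[ℝ] H →ₗ[ℝ] ℝ) (κ : H → StrongDual ℝ H)
    (G : StrongDual ℝ H) (hc_skew : ∀ v φ : H, c v φ φ = 0) (u₁ u₂ ψ₁ ψ₂ : H)
    (h₁ : ∀ φ : H, κ ψ₁ φ + c u₁ ψ₁ φ + d ψ₁ φ = G φ)
    (h₂ : ∀ φ : H, κ ψ₂ φ + c u₂ ψ₂ φ + d ψ₂ φ = G φ) :
    d (ψ₁ - ψ₂) (ψ₁ - ψ₂) = -(κ ψ₁ - κ ψ₂) (ψ₁ - ψ₂) - c (u₁ - u₂) ψ₂ (ψ₁ - ψ₂) := by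
  have h_conv := c.sub_apply_sub_of_diag_eq_zero hc_skew u₁ u₂ ψ₁ ψ₂
  have e₁ := h₁ (ψ₁ - ψ₂)
  have e₂ := h₂ (ψ₁ - ψ₂)
  rw [map_sub d ψ₁ ψ₂, LinearMap.sub_apply, sub_apply]
  linarith

theorem le_div_of_mul_sq_le_mul {δ K x : ℝ} (hδ : 0 < δ) (hK : 0 ≤ K)
    (h : δ * x ^ 2 ≤ K * x) : x ≤ K / δ := by
  rcases le_or_gt x 0 with hx | hx
  · exact hx.trans (div_nonneg hK hδ.le)
  · rw [le_div_iff₀ hδ]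
    nlinarith

theorem lipschitz_continuity_elec_operator_general
    {H : Type*} [NormedAddCommGroup H] [InnerProductSpace ℝ H]
    (c : H →ₗ[ℝ] H →ₗ[ℝ] H →ₗ[ℝ] ℝ) (d : H →ₗ[ℝ] H →ₗ[ℝ] ℝ)
    (κ : H → StrongDual ℝ H) (G : StrongDual ℝ H) (C δ : ℝ) (hδ : 0 < δ)
    (hd_coer : ∀ φ : H, δ * ‖φ‖ ^ 2 ≤ d φ φ)
    (hc_bdd : ∀ v ψ φ : H, |c v ψ φ| ≤ C ^ 2 * ‖v‖ * ‖ψ‖ * ‖φ‖)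
    (hc_skew : ∀ v φ : H, c v φ φ = 0)
    (hκ_mono : ∀ ψ₁ ψ₂ : H, 0 ≤ (κ ψ₁ - κ ψ₂) (ψ₁ - ψ₂))
    (uhat₁ uhat₂ ψ₁ ψ₂ : H)
    (h₁ : ∀ φ : H, (κ ψ₁) φ + c uhat₁ ψ₁ φ + d ψ₁ φ = G φ)
    (h₂ : ∀ φ : H, (κ ψ₂) φ + c uhat₂ ψ₂ φ + d ψ₂ φ = G φ) :
    ‖ψ₁ - ψ₂‖ ≤ (C ^ 2 / δ) * ‖ψ₂‖ * ‖uhat₁ - uhat₂‖ := by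
  have h_energy : δ * ‖ψ₁ - ψ₂‖ ^ 2 ≤ C ^ 2 * ‖ψ₂‖ * ‖uhat₁ - uhat₂‖ * ‖ψ₁ - ψ₂‖ :=
    calc δ * ‖ψ₁ - ψ₂‖ ^ 2
        ≤ d (ψ₁ - ψ₂) (ψ₁ - ψ₂) := hd_coer _
      _ = -(κ ψ₁ - κ ψ₂) (ψ₁ - ψ₂) - c (uhat₁ - uhat₂) ψ₂ (ψ₁ - ψ₂) :=
        energy_identity_sub c d κ G hc_skew uhat₁ uhat₂ ψ₁ ψ₂ h₁ h₂
      _ ≤ -c (uhat₁ - uhat₂) ψ₂ (ψ₁ - ψ₂) := by linarith [hκ_mono ψ₁ ψ₂]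
      _ ≤ |c (uhat₁ - uhat₂) ψ₂ (ψ₁ - ψ₂)| := neg_le_abs _
      _ ≤ C ^ 2 * ‖uhat₁ - uhat₂‖ * ‖ψ₂‖ * ‖ψ₁ - ψ₂‖ := hc_bdd _ _ _
      _ = C ^ 2 * ‖ψ₂‖ * ‖uhat₁ - uhat₂‖ * ‖ψ₁ - ψ₂‖ := by ring
  calc ‖ψ₁ - ψ₂‖ ≤ C ^ 2 * ‖ψ₂‖ * ‖uhat₁ - uhat₂‖ / δ :=
        le_div_of_mul_sq_le_mul hδ (by positivity) h_energy
    _ = (C ^ 2 / δ) * ‖ψ₂‖ * ‖uhat₁ - uhat₂‖ := by ring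

theorem lipschitz_continuity_elec_operator
    {H : Type*} [NormedAddCommGroup H] [InnerProductSpace ℝ H] [CompleteSpace H]
    (c : H →ₗ[ℝ] H →ₗ[ℝ] H →ₗ[ℝ] ℝ) (d : H →ₗ[ℝ] H →ₗ[ℝ] ℝ)
    (κ : H → StrongDual ℝ H) (G : StrongDual ℝ H) (C δ Md : ℝ) (hδ : 0 < δ)
    (hd_bdd : ∀ ψ φ : H, |d ψ φ| ≤ Md * ‖ψ‖ * ‖φ‖)
    (hd_coer : ∀ φ : H, δ * ‖φ‖ ^ 2 ≤ d φ φ)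
    (hc_bdd : ∀ v ψ φ : H, |c v ψ φ| ≤ C ^ 2 * ‖v‖ * ‖ψ‖ * ‖φ‖)
    (hc_skew : ∀ v φ : H, c v φ φ = 0)
    (hκ_mono : ∀ ψ₁ ψ₂ : H, 0 ≤ (κ ψ₁ - κ ψ₂) (ψ₁ - ψ₂))
    (uhat₁ uhat₂ ψ₁ ψ₂ : H)
    (h₁ : ∀ φ : H, (κ ψ₁) φ + c uhat₁ ψ₁ φ + d ψ₁ φ = G φ)
    (h₂ : ∀ φ : H, (κ ψ₂) φ + c uhat₂ ψ₂ φ + d ψ₂ φ = G φ) :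
    ‖ψ₁ - ψ₂‖ ≤ (C ^ 2 / δ) * ‖ψ₂‖ * ‖uhat₁ - uhat₂‖ :=
  lipschitz_continuity_elec_operator_general c d κ G C δ hδ hd_coer hc_bdd hc_skew hκ_mono uhat₁
    uhat₂ ψ₁ ψ₂ h₁ h₂
end

section
/- Let V, Q be real Hilbert spaces, a a bounded bilinear form on V that is coercive on V with constant γ, b a bounded bilinear form on V × Q satisfying the inf-sup condition sup_{v≠0} b(v,q)/‖v‖ ≥ β‖q‖ for all q ∈ Q. Then for every F ∈ V' there is a unique (u, p) ∈ V × Q with a(u,v) + b(v,p) = F(v) for all v ∈ V and b(u,q) = 0 for all q ∈ Q; moreover ‖u‖ ≤ ‖F‖/γ. -/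
/-!
Represent `b` by the operator `A : V → Q` with `⟪A v, q⟫ = b v q`. The inf-sup condition says
that `A†` is bounded below, so `A†` has closed range and hence `(ker A)ᗮ = range A†`.
Lax–Milgram on the closed subspace `ker A = {v | ∀ q, b v q = 0}` gives the velocity `u`; the
residual `F - a u` then vanishes on `ker A`, so its Riesz representative lies in `range A†`,
which yields the pressure `p`. Uniqueness follows from coercivity and inf-sup applied to the
homogeneous system, and testing the first equation with `v = u` gives the bound.
-/

open NormedSpace

open InnerProductSpace (toDual)
open scoped RealInnerProductSpace InnerProduct

namespace ContinuousLinearMap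

variable {𝕜 E F : Type*} [RCLike 𝕜] [NormedAddCommGroup E] [NormedAddCommGroup F]

theorem isClosed_range_of_mul_norm_le [NormedSpace 𝕜 E] [NormedSpace 𝕜 F] [CompleteSpace E]
    (f : E →L[𝕜] F) {c : ℝ} (hc : 0 < c) (hf : ∀ x, c * ‖x‖ ≤ ‖f x‖) :
    IsClosed (f.range : Set F) := by
  have hanti : AntilipschitzWith ⟨c⁻¹, (inv_pos.2 hc).le⟩ f :=
    f.antilipschitz_of_bound fun x => (le_inv_mul_iff₀ hc).2 (hf x)
  exact hanti.isClosed_range f.uniformContinuous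

theorem orthogonal_ker_eq_range_adjoint [InnerProductSpace 𝕜 E] [InnerProductSpace 𝕜 F]
    [CompleteSpace E] [CompleteSpace F] (T : E →L[𝕜] F) {c : ℝ} (hc : 0 < c)
    (hT : ∀ y, c * ‖y‖ ≤ ‖(T†) y‖) : T.kerᗮ = T†.range := by
  rw [T.orthogonal_ker, (T†.isClosed_range_of_mul_norm_le hc hT).submodule_topologicalClosure_eq]

end ContinuousLinearMap

namespace IsCoercive

variable {V : Type*} [NormedAddCommGroup V] [InnerProductSpace ℝ V] {a : V →L[ℝ] V →L[ℝ] ℝ}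

theorem eq_zero_of_apply_self_eq_zero (ha : IsCoercive a) {u : V} (hu : a u u = 0) : u = 0 := by
  obtain ⟨C, hC, hcoer⟩ := ha
  have : C * ‖u‖ * ‖u‖ ≤ 0 := hu ▸ hcoer u
  have : ‖u‖ * ‖u‖ ≤ 0 := nonpos_of_mul_nonpos_right (by linarith) hC
  exact norm_eq_zero.1 (mul_self_eq_zero.1 (le_antisymm this (mul_self_nonneg _)))

theorem bilinearComp_subtypeL (ha : IsCoercive a) (K : Submodule ℝ V) :
    IsCoercive (a.bilinearComp K.subtypeL K.subtypeL) := by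
  obtain ⟨C, hC, hcoer⟩ := ha
  exact ⟨C, hC, fun u => hcoer u⟩

theorem exists_forall_apply_eq [CompleteSpace V] (ha : IsCoercive a) (f : StrongDual ℝ V) :
    ∃ u, ∀ v, a u v = f v := by
  refine ⟨ha.continuousLinearEquivOfBilin.symm ((toDual ℝ V).symm f), fun v => ?_⟩
  rw [← ha.continuousLinearEquivOfBilin_apply, ContinuousLinearEquiv.apply_symm_apply,
    InnerProductSpace.toDual_symm_apply]

theorem exists_mem_forall_mem_apply_eq (ha : IsCoercive a) (K : Submodule ℝ V) [CompleteSpace K]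
    (f : StrongDual ℝ V) : ∃ u ∈ K, ∀ w ∈ K, a u w = f w := by
  obtain ⟨u, hu⟩ := (ha.bilinearComp_subtypeL K).exists_forall_apply_eq (f ∘L K.subtypeL)
  exact ⟨u, u.2, fun w hw => hu ⟨w, hw⟩⟩

end IsCoercive

theorem norm_le_norm_div_of_mul_sq_le {E : Type*} [SeminormedAddCommGroup E] [NormedSpace ℝ E]
    (f : StrongDual ℝ E) {u : E} {γ : ℝ} (hγ : 0 < γ) (hu : γ * ‖u‖ ^ 2 ≤ f u) :
    ‖u‖ ≤ ‖f‖ / γ := by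
  have hfu : f u ≤ ‖f‖ * ‖u‖ := (le_abs_self _).trans (f.le_opNorm u)
  rw [le_div_iff₀ hγ]
  rcases (norm_nonneg u).eq_or_lt with hu0 | hu0
  · rw [← hu0, zero_mul]; positivity
  · nlinarith

section SaddlePoint

variable {V Q : Type*} [NormedAddCommGroup V] [InnerProductSpace ℝ V]
  [NormedAddCommGroup Q] [InnerProductSpace ℝ Q]

/-- `sup_{v ≠ 0} b v q / ‖v‖ ≥ β ‖q‖`, phrased through upper bounds to avoid the supremum. -/
def IsInfSupStable (b : V →L[ℝ] Q →L[ℝ] ℝ) (β : ℝ) : Prop :=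
  ∀ q : Q, ∀ cst : ℝ, (∀ v : V, b v q ≤ cst * ‖v‖) → β * ‖q‖ ≤ cst

theorem IsInfSupStable.eq_zero {b : V →L[ℝ] Q →L[ℝ] ℝ} {β : ℝ} (hb : IsInfSupStable b β)
    (hβ : 0 < β) {p : Q} (hp : ∀ v, b v p = 0) : p = 0 := by
  have := hb p 0 fun v => by simp [hp v]
  exact norm_eq_zero.1 (le_antisymm (by nlinarith) (norm_nonneg p))

theorem saddlePoint_unique {a : V →L[ℝ] V →L[ℝ] ℝ} {b : V →L[ℝ] Q →L[ℝ] ℝ} {β : ℝ}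
    (ha : IsCoercive a) (hb : IsInfSupStable b β) (hβ : 0 < β) {F : StrongDual ℝ V}
    {u u' : V} {p p' : Q} (h₁ : ∀ v, a u v + b v p = F v) (h₂ : ∀ q, b u q = 0)
    (h₁' : ∀ v, a u' v + b v p' = F v) (h₂' : ∀ q, b u' q = 0) : u = u' ∧ p = p' := by
  have hu : u = u' := by
    refine sub_eq_zero.1 (ha.eq_zero_of_apply_self_eq_zero ?_)
    have e := h₁ (u - u')
    have e' := h₁' (u - u')
    simp only [map_sub, sub_apply] at e e' ⊢
    linarith [h₂ p, h₂ p', h₂' p, h₂' p']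
  refine ⟨hu, sub_eq_zero.1 (hb.eq_zero hβ fun v => ?_)⟩
  have e := h₁ v
  have e' := h₁' v
  rw [hu] at e
  rw [map_sub]
  linarith

variable [CompleteSpace Q]

noncomputable def bilinOperator (b : V →L[ℝ] Q →L[ℝ] ℝ) : V →L[ℝ] Q :=
  (toDual ℝ Q).symm.toContinuousLinearEquiv.toContinuousLinearMap ∘L b

theorem mem_ker_bilinOperator (b : V →L[ℝ] Q →L[ℝ] ℝ) {v : V} :
    v ∈ (bilinOperator b).ker ↔ ∀ q, b v q = 0 := by
  simp [bilinOperator, ContinuousLinearMap.ext_iff]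

variable [CompleteSpace V]

theorem inner_adjoint_bilinOperator_apply (b : V →L[ℝ] Q →L[ℝ] ℝ) (q : Q) (v : V) :
    ⟪((bilinOperator b)†) q, v⟫ = b v q := by
  rw [ContinuousLinearMap.adjoint_inner_left, real_inner_comm]
  exact InnerProductSpace.toDual_symm_apply

theorem IsInfSupStable.mul_norm_le_norm_adjoint_bilinOperator {b : V →L[ℝ] Q →L[ℝ] ℝ} {β : ℝ}
    (hb : IsInfSupStable b β) (q : Q) : β * ‖q‖ ≤ ‖((bilinOperator b)†) q‖ :=
  hb q _ fun v => inner_adjoint_bilinOperator_apply b q v ▸ real_inner_le_norm _ _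

theorem IsInfSupStable.exists_forall_eq_apply {b : V →L[ℝ] Q →L[ℝ] ℝ} {β : ℝ}
    (hb : IsInfSupStable b β) (hβ : 0 < β) (G : StrongDual ℝ V)
    (hG : ∀ v, (∀ q, b v q = 0) → G v = 0) : ∃ p, ∀ v, G v = b v p := by
  have hg : (toDual ℝ V).symm G ∈ (bilinOperator b).kerᗮ := by
    refine (Submodule.mem_orthogonal _ _).2 fun v hv => ?_
    rw [real_inner_comm, InnerProductSpace.toDual_symm_apply]
    exact hG v ((mem_ker_bilinOperator b).1 hv)
  rw [(bilinOperator b).orthogonal_ker_eq_range_adjoint hβ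
    hb.mul_norm_le_norm_adjoint_bilinOperator] at hg
  obtain ⟨p, hp : ((bilinOperator b)†) p = _⟩ := hg
  refine ⟨p, fun v => ?_⟩
  rw [← inner_adjoint_bilinOperator_apply, hp, InnerProductSpace.toDual_symm_apply]

theorem exists_saddlePoint {a : V →L[ℝ] V →L[ℝ] ℝ} {b : V →L[ℝ] Q →L[ℝ] ℝ} {β : ℝ}
    (ha : IsCoercive a) (hb : IsInfSupStable b β) (hβ : 0 < β) (F : StrongDual ℝ V) :
    ∃ u p, (∀ v, a u v + b v p = F v) ∧ ∀ q, b u q = 0 := by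
  obtain ⟨u, hu_ker, hu⟩ := ha.exists_mem_forall_mem_apply_eq (bilinOperator b).ker F
  obtain ⟨p, hp⟩ := hb.exists_forall_eq_apply hβ (F - a u) fun v hv => by
    simp [hu v ((mem_ker_bilinOperator b).2 hv)]
  refine ⟨u, p, fun v => ?_, (mem_ker_bilinOperator b).1 hu_ker⟩
  rw [← hp, sub_apply, add_sub_cancel]

end SaddlePoint

theorem babuska_brezzi_wellposedness
    {V Q : Type*} [NormedAddCommGroup V] [InnerProductSpace ℝ V] [CompleteSpace V]
    [NormedAddCommGroup Q] [InnerProductSpace ℝ Q] [CompleteSpace Q]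
    (a : V →ₗ[ℝ] V →ₗ[ℝ] ℝ) (b : V →ₗ[ℝ] Q →ₗ[ℝ] ℝ)
    (Ma Mb γ β : ℝ) (hγ : 0 < γ) (hβ : 0 < β)
    (ha_bdd : ∀ u v : V, |a u v| ≤ Ma * ‖u‖ * ‖v‖)
    (ha_coer : ∀ v : V, γ * ‖v‖ ^ 2 ≤ a v v)
    (hb_bdd : ∀ (v : V) (q : Q), |b v q| ≤ Mb * ‖v‖ * ‖q‖)
    (hb_infsup : ∀ q : Q, ∀ cst : ℝ, (∀ v : V, b v q ≤ cst * ‖v‖) → β * ‖q‖ ≤ cst)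
    (F : StrongDual ℝ V) :
    (∃! up : V × Q, (∀ v : V, a up.1 v + b v up.2 = F v) ∧ (∀ q : Q, b up.1 q = 0)) ∧
    (∀ (u : V) (p : Q), (∀ v : V, a u v + b v p = F v) → (∀ q : Q, b u q = 0) →
      ‖u‖ ≤ ‖F‖ / γ) := by
  let aC := a.mkContinuous₂ Ma ha_bdd
  let bC := b.mkContinuous₂ Mb hb_bdd
  have ha : IsCoercive aC := ⟨γ, hγ, fun v => by rw [mul_assoc, ← sq]; exact ha_coer v⟩
  have hb : IsInfSupStable bC β := hb_infsup
  refine ⟨?_, fun u p h₁ h₂ => norm_le_norm_div_of_mul_sq_le F hγ ?_⟩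
  · obtain ⟨u, p, h⟩ := exists_saddlePoint ha hb hβ F
    refine ⟨(u, p), h, fun up' h' => ?_⟩
    obtain ⟨hu, hp⟩ := saddlePoint_unique ha hb hβ h'.1 h'.2 h.1 h.2
    exact Prod.ext hu hp
  · calc γ * ‖u‖ ^ 2 ≤ a u u := ha_coer u
      _ = F u := by linarith [h₁ u, h₂ p]
end
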